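/- arXiv:2210.04523 — 4 statements merged into one kernel-verified Lean document; each statement's English description precedes it below -/
import Mathlib

section
/- Let n, k, s, a, f be natural numbers with k ≥ 1, k ≤ n, s ≤ n − k, a + f = n·k, and 2·a ≤ k·(k+1) + 2·k·s. Then 2·f ≥ k·(k−1). In particular, when k > 1, at least k(k−1)/2 restrictions beyond those provided by the proxies must be imposed on the n·k entries of A_{1•}. -/
/-- Necessary order condition of Proposition 1(ii): with `a + f = nk` free and
restricted parameters and `a ≤ m = k(k+1)/2 + ks` (here `2a ≤ k(k+1) + 2ks`),
`s ≤ n − k` implies `f ≥ k(k−1)/2` (here `2f ≥ k(k−1)`). -/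
theorem stmt_8 (n k s a f : ℕ) (hk : 1 ≤ k) (hkn : k ≤ n) (hs : s ≤ n - k)
    (haf : a + f = n * k) (ha : 2 * a ≤ k * (k + 1) + 2 * k * s) :
    2 * f ≥ k * (k - 1) := by
  have hs' : s + k ≤ n := by omega
  obtain ⟨m, rfl⟩ : ∃ m, k = m + 1 := ⟨k - 1, by omega⟩
  simp only [Nat.add_sub_cancel]
  nlinarith [Nat.mul_le_mul_left (m+1) hs']
end

section
/- Let n, s ≥ 1 with s ≤ n, let Σ be a symmetric invertible real n×n matrix and K a real s×n matrix such that K·Σ⁻¹ has rank s. Then the linear map (H, L) ↦ (L·Σ⁻¹·Kᵀ + K·Σ⁻¹·Lᵀ − K·Σ⁻¹·H·Σ⁻¹·Kᵀ, L), defined for H a symmetric real n×n matrix and L a real s×n matrix, is surjective onto the product of the symmetric real s×s matrices and the real s×n matrices. -/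
open Matrix

lemma isUnit_of_rank_eq_card {s : ℕ} (M : Matrix (Fin s) (Fin s) ℝ)
    (h : M.rank = s) : IsUnit M := by
  rw [← Matrix.mulVec_surjective_iff_isUnit]
  have htop : LinearMap.range M.mulVecLin = ⊤ := by
    apply Submodule.eq_top_of_finrank_eq
    rw [← Matrix.rank, h, Module.finrank_fintype_fun_eq_card, Fintype.card_fin]
  intro v
  have : v ∈ LinearMap.range M.mulVecLin := htop ▸ Submodule.mem_top
  exact this

lemma exists_sym_solution {s n : ℕ} (B : Matrix (Fin s) (Fin n) ℝ) (hB : B.rank = s)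
    (W : Matrix (Fin s) (Fin s) ℝ) (hW : Wᵀ = W) :
    ∃ H : Matrix (Fin n) (Fin n) ℝ, Hᵀ = H ∧ B * H * Bᵀ = W := by
  obtain ⟨M, hMdef⟩ : ∃ M, M = B * Bᵀ := ⟨_, rfl⟩
  have hMrank : M.rank = s := by rw [hMdef, Matrix.rank_self_mul_transpose, hB]
  have hMdet : IsUnit M.det :=
    (Matrix.isUnit_iff_isUnit_det M).mp (isUnit_of_rank_eq_card M hMrank)
  have hMsym : Mᵀ = M := by rw [hMdef, Matrix.transpose_mul, Matrix.transpose_transpose]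
  have hMinvSym : (M⁻¹)ᵀ = M⁻¹ := by rw [Matrix.transpose_nonsing_inv, hMsym]
  have hMM : M * M⁻¹ = 1 := Matrix.mul_nonsing_inv M hMdet
  have hMM' : M⁻¹ * M = 1 := Matrix.nonsing_inv_mul M hMdet
  refine ⟨Bᵀ * (M⁻¹ * (W * (M⁻¹ * B))), ?_, ?_⟩
  · simp only [Matrix.transpose_mul, Matrix.transpose_transpose, hMinvSym, hW,
      Matrix.mul_assoc]
  · calc B * (Bᵀ * (M⁻¹ * (W * (M⁻¹ * B)))) * Bᵀ
        = (B * Bᵀ) * (M⁻¹ * (W * (M⁻¹ * (B * Bᵀ)))) := by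
          simp only [Matrix.mul_assoc]
      _ = M * (M⁻¹ * (W * (M⁻¹ * M))) := by rw [← hMdef]
      _ = W := by rw [hMM', Matrix.mul_one, ← Matrix.mul_assoc, hMM, Matrix.one_mul]

/-- Full-row-rank property of the Jacobian `J_{σ⁺}` (Lemma S.2(ii)): if
`K Σ⁻¹` has full row rank `s`, the linear map
`(H, L) ↦ (L Σ⁻¹ Kᵀ + K Σ⁻¹ Lᵀ − K Σ⁻¹ H Σ⁻¹ Kᵀ, L)` (with `H` symmetric) is
surjective onto (symmetric `s×s` matrices) × (`s×n` matrices). -/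
theorem stmt_12 (n s : ℕ) (hs : 1 ≤ s) (hsn : s ≤ n)
    (Sig : Matrix (Fin n) (Fin n) ℝ) (hsym : Sigᵀ = Sig) (hinv : IsUnit Sig.det)
    (K : Matrix (Fin s) (Fin n) ℝ) (hK : (K * Sig⁻¹).rank = s) :
    ∀ Y : Matrix (Fin s) (Fin s) ℝ, Yᵀ = Y →
      ∀ Z : Matrix (Fin s) (Fin n) ℝ,
        ∃ (H : Matrix (Fin n) (Fin n) ℝ) (L : Matrix (Fin s) (Fin n) ℝ),
          Hᵀ = H ∧
          L * Sig⁻¹ * Kᵀ + K * Sig⁻¹ * Lᵀ - K * Sig⁻¹ * H * Sig⁻¹ * Kᵀ = Y ∧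
          L = Z := by
  intro Y hY Z
  obtain ⟨B, hBdef⟩ : ∃ B, B = K * Sig⁻¹ := ⟨_, rfl⟩
  have hSinv : (Sig⁻¹)ᵀ = Sig⁻¹ := by rw [Matrix.transpose_nonsing_inv, hsym]
  have hBt : Bᵀ = Sig⁻¹ * Kᵀ := by rw [hBdef, Matrix.transpose_mul, hSinv]
  have hBrank : B.rank = s := by rw [hBdef]; exact hK
  have hWsym : (Z * Bᵀ + B * Zᵀ - Y)ᵀ = Z * Bᵀ + B * Zᵀ - Y := by
    simp only [Matrix.transpose_sub, Matrix.transpose_add, Matrix.transpose_mul,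
      Matrix.transpose_transpose, hY]
    abel
  obtain ⟨H, hHsym, hKey⟩ := exists_sym_solution B hBrank (Z * Bᵀ + B * Zᵀ - Y) hWsym
  refine ⟨H, Z, hHsym, ?_, rfl⟩
  have e1 : Z * Sig⁻¹ * Kᵀ = Z * Bᵀ := by rw [hBt, Matrix.mul_assoc]
  have e2 : K * Sig⁻¹ * Zᵀ = B * Zᵀ := by rw [hBdef]
  have e3 : K * Sig⁻¹ * H * Sig⁻¹ * Kᵀ = B * H * Bᵀ := by
    rw [Matrix.mul_assoc (K * Sig⁻¹ * H) Sig⁻¹ Kᵀ, ← hBt, ← hBdef]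
  rw [e1, e2, e3, hKey]
  abel
end

section
/- Let (Ω, F, P) be a probability space. For each j ∈ ℕ let G_j ⊆ F be a sub-σ-algebra, A_j ∈ G_j and B_j ∈ F events, and let c ∈ ℝ be a constant. Suppose the conditional expectations E[1_{B_j} | G_j] converge to c in probability as j → ∞ (for every ε > 0, P(|E[1_{B_j} | G_j] − c| > ε) → 0). Then P(A_j ∩ B_j) − P(A_j)·P(B_j) → 0 as j → ∞. -/
/-!
Write `f = E[1_B | G]`. Since `A` is `G`-measurable, `P(A ∩ B) = ∫_A f` and `P(B) = ∫ f`, so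
for every constant `c`
`P(A ∩ B) - P(A) P(B) = ∫_A (f - c) - P(A) ∫ (f - c)`, whose absolute value is at most
`2 ∫ |f - c|`. As `0 ≤ f ≤ 1`, convergence of `f_j` to `c` in probability upgrades to
convergence in `L¹` (Vitali's theorem for a uniformly bounded family).
-/

open MeasureTheory Filter

section ConvergenceInMeasure

variable {α E : Type*} {m0 : MeasurableSpace α} {μ : Measure α}

theorem tendstoInMeasure_of_tendsto_measure_dist_gt {ι : Type*} [PseudoMetricSpace E]
    {l : Filter ι} {f : ι → α → E} {g : α → E}
    (h : ∀ ε > (0 : ℝ), Tendsto (fun i => μ {x | ε < dist (f i x) (g x)}) l (nhds 0)) :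
    TendstoInMeasure μ f l g := by
  refine tendstoInMeasure_iff_dist.2 fun ε hε => ?_
  refine tendsto_of_tendsto_of_tendsto_of_le_of_le tendsto_const_nhds (h (ε / 2) (half_pos hε))
    (fun _ => zero_le) fun i => measure_mono fun x (hx : ε ≤ _) => ?_
  show ε / 2 < _
  linarith

theorem unifIntegrable_of_ae_norm_le {ι : Type*} [NormedAddCommGroup E] {p : ENNReal}
    (hp : 1 ≤ p) (hp' : p ≠ ⊤) {f : ι → α → E} (hf : ∀ i, AEStronglyMeasurable (f i) μ)
    (M : ℝ) (hbd : ∀ i, ∀ᵐ x ∂μ, ‖f i x‖ ≤ M) :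
    UnifIntegrable f p μ := by
  refine unifIntegrable_of hp hp' hf fun ε hε => ⟨(M + 1).toNNReal, fun i => ?_⟩
  have hzero : {x | (M + 1).toNNReal ≤ ‖f i x‖₊}.indicator (f i) =ᵐ[μ] 0 := by
    filter_upwards [hbd i] with x hx
    refine Set.indicator_of_notMem (fun hx' => ?_) (f i)
    have := Real.toNNReal_le_iff_le_coe.1 hx'
    rw [coe_nnnorm] at this
    linarith
  rw [eLpNorm_congr_ae hzero, eLpNorm_zero]
  exact bot_le

theorem tendsto_integral_norm_sub_of_tendstoInMeasure [NormedAddCommGroup E] [IsFiniteMeasure μ]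
    {f : ℕ → α → E} {g : α → E} (hf : ∀ n, AEStronglyMeasurable (f n) μ) (hg : MemLp g 1 μ)
    (M : ℝ) (hbd : ∀ n, ∀ᵐ x ∂μ, ‖f n x‖ ≤ M) (hfg : TendstoInMeasure μ f atTop g) :
    Tendsto (fun n => ∫ x, ‖f n x - g x‖ ∂μ) atTop (nhds 0) := by
  have hL1 := tendsto_Lp_finite_of_tendstoInMeasure le_rfl ENNReal.one_ne_top hf hg
    (unifIntegrable_of_ae_norm_le le_rfl ENNReal.one_ne_top hf M hbd) hfg
  refine ((ENNReal.tendsto_toReal ENNReal.zero_ne_top).comp hL1).congr fun n => ?_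
  simp only [Function.comp_apply, eLpNorm_one_eq_lintegral_enorm, Pi.sub_apply]
  exact (integral_norm_eq_lintegral_enorm ((hf n).sub hg.1)).symm

end ConvergenceInMeasure

section Covariance

variable {Ω : Type*} {m m0 : MeasurableSpace Ω} {μ : Measure Ω}

theorem ae_abs_condExp_indicator_one_le (t : Set Ω) :
    ∀ᵐ x ∂μ, |μ[t.indicator (fun _ => (1 : ℝ)) | m] x| ≤ 1 :=
  ae_bdd_abs_condExp_of_ae_bdd_abs (Eventually.of_forall fun x => by
    by_cases hx : x ∈ t <;> simp [hx])

variable [IsProbabilityMeasure μ]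

theorem abs_setIntegral_sub_mul_integral_le (hm : m ≤ m0) {g : Ω → ℝ} (hg : Integrable g μ)
    {s : Set Ω} (hs : MeasurableSet[m] s) (c : ℝ) :
    |∫ x in s, g x ∂μ - μ.real s * ∫ x, g x ∂μ| ≤ 2 * ∫ x, |μ[g|m] x - c| ∂μ := by
  set h := fun x => μ[g|m] x - c
  have hh : Integrable h μ := integrable_condExp.sub (integrable_const c)
  have hcentered : ∫ x in s, g x ∂μ - μ.real s * ∫ x, g x ∂μ
      = ∫ x in s, h x ∂μ - μ.real s * ∫ x, h x ∂μ := by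
    rw [integral_sub integrable_condExp.restrict (integrable_const c),
      integral_sub integrable_condExp (integrable_const c), setIntegral_condExp hm hg hs,
      integral_condExp hm, setIntegral_const, integral_const]
    simp only [probReal_univ, smul_eq_mul, one_mul]
    ring
  have hset : |∫ x in s, h x ∂μ| ≤ ∫ x, |h x| ∂μ :=
    abs_integral_le_integral_abs.trans
      (setIntegral_le_integral hh.abs (Eventually.of_forall fun x => abs_nonneg _))
  have hall : |∫ x, h x ∂μ| ≤ ∫ x, |h x| ∂μ := abs_integral_le_integral_abs
  calc |∫ x in s, g x ∂μ - μ.real s * ∫ x, g x ∂μ|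
      = |∫ x in s, h x ∂μ - μ.real s * ∫ x, h x ∂μ| := by rw [hcentered]
    _ ≤ |∫ x in s, h x ∂μ| + μ.real s * |∫ x, h x ∂μ| :=
        (abs_sub _ _).trans_eq (by rw [abs_mul, abs_of_nonneg measureReal_nonneg])
    _ ≤ ∫ x, |h x| ∂μ + 1 * ∫ x, |h x| ∂μ := by
        gcongr
        exact measureReal_le_one
    _ = 2 * ∫ x, |h x| ∂μ := by ring

theorem abs_measureReal_inter_sub_mul_le (hm : m ≤ m0) {s t : Set Ω} (hs : MeasurableSet[m] s)
    (ht : MeasurableSet t) (c : ℝ) :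
    |μ.real (s ∩ t) - μ.real s * μ.real t|
      ≤ 2 * ∫ x, |μ[t.indicator (fun _ => (1 : ℝ)) | m] x - c| ∂μ := by
  have hst : ∫ x in s, t.indicator (fun _ => (1 : ℝ)) x ∂μ = μ.real (s ∩ t) := by
    rw [integral_indicator_const _ ht, measureReal_restrict_apply ht, smul_eq_mul, mul_one,
      Set.inter_comm]
  have ht' : ∫ x, t.indicator (fun _ => (1 : ℝ)) x ∂μ = μ.real t := by
    rw [integral_indicator_const _ ht, smul_eq_mul, mul_one]
  rw [← hst, ← ht']
  exact abs_setIntegral_sub_mul_integral_le hm ((integrable_const 1).indicator ht) hs c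

end Covariance

/-- Core of Proposition 7 (asymptotic independence): if `A_j` is `G_j`-measurable
and the conditional probabilities `E[1_{B_j} | G_j]` converge in probability to a
constant `c`, then `P(A_j ∩ B_j) − P(A_j) P(B_j) → 0`. -/
theorem stmt_16 {Ω : Type*} [m0 : MeasurableSpace Ω] (P : Measure Ω)
    [IsProbabilityMeasure P]
    (G : ℕ → MeasurableSpace Ω) (hG : ∀ j, G j ≤ m0)
    (A B : ℕ → Set Ω)
    (hA : ∀ j, MeasurableSet[G j] (A j)) (hB : ∀ j, MeasurableSet (B j))
    (c : ℝ)
    (hconv : ∀ ε > (0 : ℝ), Tendsto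
      (fun j => P {ω | ε < |(P[(B j).indicator (fun _ => (1 : ℝ)) | G j]) ω - c|})
      atTop (nhds 0)) :
    Tendsto (fun j => (P (A j ∩ B j)).toReal - (P (A j)).toReal * (P (B j)).toReal)
      atTop (nhds 0) := by
  have hmeas : TendstoInMeasure P (fun j => P[(B j).indicator (fun _ => (1 : ℝ)) | G j]) atTop
      (fun _ => c) :=
    tendstoInMeasure_of_tendsto_measure_dist_gt (by simpa only [Real.dist_eq] using hconv)
  have hL1 := tendsto_integral_norm_sub_of_tendstoInMeasure
    (fun j => stronglyMeasurable_condExp.aestronglyMeasurable.mono (hG j)) (memLp_const c) 1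
    (fun j => ae_abs_condExp_indicator_one_le (B j)) hmeas
  refine squeeze_zero_norm (fun j => ?_) (by simpa using hL1.const_mul 2)
  exact abs_measureReal_inter_sub_mul_le (hG j) (hA j) (hB j) c
end

section
/- Let n ≥ 2, let Σ be a symmetric positive definite real n×n matrix, let a ∈ ℝⁿ be nonzero, and let W be a real n×(n−1) matrix with rank W = n − 1 and Wᵀ·a = 0. Then the linear map x ↦ (aᵀ·Σ·x, Wᵀ·x) from ℝⁿ to ℝ × ℝ^{n−1} is injective. -/
/-!
By rank–nullity the kernel of `Wᵀ` is the line spanned by `a`. On that line the form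
`x ↦ aᵀ Σ x` vanishes only at `0`: for `z = c a` one has `zᵀ Σ z = c · aᵀ Σ z`, and `Σ` is
positive definite.
-/

open Matrix

namespace Matrix

variable {K m n : Type*} [Field K] [Fintype n]

theorem rank_add_finrank_ker_mulVecLin (B : Matrix m n K) :
    B.rank + Module.finrank K (LinearMap.ker B.mulVecLin) = Fintype.card n :=
  (LinearMap.finrank_range_add_finrank_ker B.mulVecLin).trans
    (Module.finrank_fintype_fun_eq_card K)

theorem ker_mulVecLin_eq_span_singleton (B : Matrix m n K) {a : n → K}
    (hB : B.rank + 1 = Fintype.card n) (ha : a ≠ 0) (hBa : B *ᵥ a = 0) :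
    LinearMap.ker B.mulVecLin = K ∙ a := by
  have hker : Module.finrank K (LinearMap.ker B.mulVecLin) = 1 := by
    have := B.rank_add_finrank_ker_mulVecLin
    omega
  exact eq_span_singleton_of_mem_of_finrank_eq_one hker hBa ha

end Matrix

namespace Matrix.PosDef

variable {R n : Type*} [CommRing R] [PartialOrder R] [StarRing R] [Fintype n]

theorem eq_zero_of_mem_span_singleton {M : Matrix n n R} (hM : M.PosDef) {a z : n → R}
    (hz : z ∈ R ∙ a) (haz : star a ⬝ᵥ M *ᵥ z = 0) : z = 0 := by
  obtain ⟨c, rfl⟩ := Submodule.mem_span_singleton.mp hz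
  by_contra hc
  have hpos := hM.dotProduct_mulVec_pos hc
  rw [star_smul, smul_dotProduct, haz, smul_zero] at hpos
  exact hpos.false

end Matrix.PosDef

theorem stmt_19_general (n : ℕ)
    (Sig : Matrix (Fin n) (Fin n) ℝ) (hSig : Sig.PosDef)
    (a : Fin n → ℝ) (ha : a ≠ 0)
    (W : Matrix (Fin n) (Fin (n - 1)) ℝ) (hW : W.rank = n - 1)
    (hWa : Wᵀ.mulVec a = 0) :
    Function.Injective
      (fun x : Fin n → ℝ => (a ⬝ᵥ Sig.mulVec x, Wᵀ.mulVec x)) := by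
  have hn : n ≠ 0 := by
    rintro rfl
    exact ha (Subsingleton.elim _ _)
  have hrank : Wᵀ.rank + 1 = Fintype.card (Fin n) := by
    rw [rank_transpose, hW, Fintype.card_fin]
    omega
  have hker := Wᵀ.ker_mulVecLin_eq_span_singleton hrank ha hWa
  intro x y hxy
  obtain ⟨hSig_eq, hW_eq⟩ := Prod.mk.inj hxy
  rw [← sub_eq_zero]
  refine hSig.eq_zero_of_mem_span_singleton (a := a) ?_ ?_
  · rw [← hker, LinearMap.mem_ker, mulVecLin_apply, mulVec_sub, hW_eq, sub_self]
  · rw [star_trivial, mulVec_sub, dotProduct_sub, hSig_eq, sub_self]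

/-- Rank condition of Proposition 1 for `k = 1`, `s = n − 1`: with `Σ` positive
definite, `a ≠ 0`, `W` of full column rank `n − 1` and `Wᵀ a = 0`, the map
`x ↦ (aᵀ Σ x, Wᵀ x)` is injective. -/
theorem stmt_19 (n : ℕ) (hn : 2 ≤ n)
    (Sig : Matrix (Fin n) (Fin n) ℝ) (hSig : Sig.PosDef)
    (a : Fin n → ℝ) (ha : a ≠ 0)
    (W : Matrix (Fin n) (Fin (n - 1)) ℝ) (hW : W.rank = n - 1)
    (hWa : Wᵀ.mulVec a = 0) :
    Function.Injective
      (fun x : Fin n → ℝ => (a ⬝ᵥ Sig.mulVec x, Wᵀ.mulVec x)) :=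
  stmt_19_general n Sig hSig a ha W hW hWa
end
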